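/- For the standard two-dimensional Gaussian measure and z = x + iy, the complex Hermite polynomial J_{m,l−m}(z) := J_{m,l−m}(z,2) expands in products of real Hermite polynomials as J_{m,l−m}(z) = Σ_{k=0}^{l} i^{l−k} (Σ_{r+s=k} C(m,r) C(l−m,s) (−1)^{l−m−s}) H_k(x) H_{l−k}(y), where H_k is the probabilists' Hermite polynomial. -/

import Mathlib

/-!
Let `Φ_a` be the linear functional on `ℂ[x, y]` with `Φ_a(x^j y^k) = H_j(a₀) H_k(a₁)`. The
recurrence `x H_j = H_{j+1} + j H_{j-1}` reads `Φ_a(x_i p) = a_i Φ_a(p) - Φ_a(∂_i p)`, so for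
`Z = x + iy` and `z = a₀ + i a₁` we get `Φ_a(Z p) = z Φ_a(p) - 2 Φ_a(∂_{z̄} p)`. As `∂_{z̄} Z = 0`
and `∂_{z̄} Z̄ = 1`, the numbers `Φ_a(Z^m Z̄^n)` obey the recurrence
`J_{m+1,n} = z J_{m,n} - 2n J_{m,n-1}` of the complex Hermite polynomials, with the same initial
values `z̄^n`; hence `J_{m,n}(z) = Φ_a(Z^m Z̄^n)`. The expansion of `Z^m Z̄^n` is the
homogenization of `(1 + X)^m (X - 1)^n`, with `y` scaled by `i`.
-/

open Finset Polynomial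

/-- The complex Hermite polynomial `J_{m,n}(z, ρ)`. -/
noncomputable def hermiteJ (m n : ℕ) (z : ℂ) (ρ : ℝ) : ℂ :=
  ∑ r ∈ Finset.range (min m n + 1),
    (-1 : ℂ) ^ r * (r.factorial : ℂ) * (m.choose r : ℂ) * (n.choose r : ℂ) *
      z ^ (m - r) * (starRingEnd ℂ z) ^ (n - r) * (ρ : ℂ) ^ r

namespace Polynomial

theorem derivative_hermite_succ (n : ℕ) :
    derivative (hermite (n + 1)) = (n + 1 : ℤ[X]) * hermite n := by
  induction n with
  | zero => simp
  | succ n ih =>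
    have h : derivative (hermite n) = X * hermite n - hermite (n + 1) := by
      rw [hermite_succ n]; ring
    rw [hermite_succ (n + 1), derivative_sub, derivative_mul, derivative_X, one_mul, ih,
      derivative_mul, derivative_add, derivative_natCast, derivative_one, h, hermite_succ n, h]
    push_cast
    ring

theorem aeval_hermite_succ {R : Type*} [CommRing R] (a : R) (n : ℕ) :
    aeval a (hermite (n + 1)) = a * aeval a (hermite n) - n * aeval a (hermite (n - 1)) := by
  cases n with
  | zero => simp
  | succ n =>
    rw [hermite_succ (n + 1), derivative_hermite_succ]
    simp

theorem coeff_one_add_X_pow_mul_X_sub_one_pow {R : Type*} [CommRing R] (m n k : ℕ) :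
    ((1 + X) ^ m * (X - 1) ^ n : R[X]).coeff k =
      ∑ r ∈ range (k + 1), (m.choose r : R) * (n.choose (k - r) : R) * (-1 : R) ^ (n - (k - r)) := by
  rw [coeff_mul, Nat.sum_antidiagonal_eq_sum_range_succ_mk]
  refine sum_congr rfl fun r _ => ?_
  rw [coeff_one_add_X_pow, sub_eq_add_neg, ← C_1, ← C_neg, coeff_X_add_C_pow]
  ring

theorem homogenize_one_add_X_pow_mul_X_sub_one_pow {R : Type*} [CommRing R] (m n : ℕ) :
    homogenize ((1 + X) ^ m * (X - 1) ^ n : R[X]) (m + n) =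
      (MvPolynomial.X 1 + MvPolynomial.X 0) ^ m * (MvPolynomial.X 0 - MvPolynomial.X 1) ^ n := by
  apply homogenize_eq_of_isHomogeneous
  · have h1 := ((MvPolynomial.isHomogeneous_X R (1 : Fin 2)).add
      (MvPolynomial.isHomogeneous_X R 0)).pow m
    have h2 := ((MvPolynomial.isHomogeneous_X R (0 : Fin 2)).sub
      (MvPolynomial.isHomogeneous_X R 1)).pow n
    simpa using h1.mul h2
  · simp

end Polynomial

namespace MvPolynomial

section HermiteEval

variable {σ R : Type*} [Fintype σ] [CommRing R]

/-- `hermiteEval a p` is the expectation of `p(a + i G)` for a standard Gaussian vector `G`. -/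
noncomputable def hermiteEval (a : σ → R) : MvPolynomial σ R →ₗ[R] R :=
  (basisMonomials σ R).constr R fun s => ∏ i, Polynomial.aeval (a i) (hermite (s i))

theorem hermiteEval_monomial (a : σ → R) (s : σ →₀ ℕ) (c : R) :
    hermiteEval a (monomial s c) = c * ∏ i, Polynomial.aeval (a i) (hermite (s i)) := by
  have h : monomial s (1 : R) = basisMonomials σ R s := by rw [coe_basisMonomials]
  calc hermiteEval a (monomial s c) = c • hermiteEval a (basisMonomials σ R s) := by
        rw [← h, ← map_smul, smul_monomial, smul_eq_mul, mul_one]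
    _ = _ := by rw [hermiteEval, Module.Basis.constr_basis, smul_eq_mul]

theorem hermiteEval_one (a : σ → R) : hermiteEval a 1 = 1 := by
  rw [← C_1, C_apply, hermiteEval_monomial]
  simp

theorem prod_aeval_hermite_single_add [DecidableEq σ] (a : σ → R) (s : σ →₀ ℕ) (i : σ) :
    ∏ j, Polynomial.aeval (a j) (hermite ((Finsupp.single i 1 + s : σ →₀ ℕ) j)) =
      a i * ∏ j, Polynomial.aeval (a j) (hermite (s j)) -
        s i * ∏ j, Polynomial.aeval (a j) (hermite ((s - Finsupp.single i 1 : σ →₀ ℕ) j)) := by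
  have hrest : ∀ t : σ →₀ ℕ, (∀ j ≠ i, t j = s j) →
      ∏ j ∈ univ.erase i, Polynomial.aeval (a j) (hermite (t j)) =
        ∏ j ∈ univ.erase i, Polynomial.aeval (a j) (hermite (s j)) := fun t ht =>
    prod_congr rfl fun j hj => by rw [ht j (ne_of_mem_erase hj)]
  simp only [← mul_prod_erase univ _ (mem_univ i)]
  rw [hrest (Finsupp.single i 1 + s) fun j hj => by simp [Finsupp.single_eq_of_ne hj],
    hrest (s - Finsupp.single i 1) fun j hj => by simp [Finsupp.single_eq_of_ne hj]]
  simp only [Finsupp.add_apply, Finsupp.tsub_apply, Finsupp.single_eq_same]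
  rw [add_comm 1, aeval_hermite_succ]
  ring

theorem hermiteEval_X_mul (a : σ → R) (i : σ) (p : MvPolynomial σ R) :
    hermiteEval a (X i * p) = a i * hermiteEval a p - hermiteEval a (pderiv i p) := by
  classical
  induction p using MvPolynomial.induction_on' with
  | monomial s c =>
    rw [X, monomial_mul, one_mul, pderiv_monomial, hermiteEval_monomial, hermiteEval_monomial,
      hermiteEval_monomial, prod_aeval_hermite_single_add]
    ring
  | add p q hp hq => simp only [mul_add, map_add, hp, hq]; ring

end HermiteEval

section Bivariate

variable {R : Type*} [CommRing R]

theorem hermiteEval_C_mul_X_pow_mul_X_pow (a : Fin 2 → R) (r : R) (i j : ℕ) :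
    hermiteEval a (C r * (X 0 ^ i * X 1 ^ j)) =
      r * Polynomial.aeval (a 0) (hermite i) * Polynomial.aeval (a 1) (hermite j) := by
  rw [X_pow_eq_monomial, X_pow_eq_monomial, monomial_mul, C_mul_monomial, hermiteEval_monomial,
    Fin.prod_univ_two]
  simp [mul_assoc]

theorem hermiteEval_aeval_homogenize (a : Fin 2 → R) (c : R) (p : R[X]) (l : ℕ) :
    hermiteEval a (aeval ![X 0, C c * X 1] (homogenize p l)) =
      ∑ k ∈ range (l + 1), c ^ (l - k) * p.coeff k *
        Polynomial.aeval (a 0) (hermite k) * Polynomial.aeval (a 1) (hermite (l - k)) := by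
  rw [homogenize, map_sum, map_sum, Nat.sum_antidiagonal_eq_sum_range_succ_mk]
  refine sum_congr rfl fun k _ => ?_
  rw [aeval_monomial]
  simp only [algebraMap_eq, Finsupp.prod_fintype _ _ (fun _ => pow_zero _),
    Fin.prod_univ_two, Matrix.cons_val_zero, Matrix.cons_val_one, Matrix.cons_val_fin_one,
    Finsupp.coe_update, Function.update_self, Function.update_of_ne zero_ne_one,
    Finsupp.single_eq_same, mul_pow]
  rw [mul_left_comm (X 0 ^ k), ← mul_assoc, ← map_pow, ← map_mul,
    hermiteEval_C_mul_X_pow_mul_X_pow]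
  ring

end Bivariate

end MvPolynomial

open MvPolynomial

section ComplexCoordinates

noncomputable def zCoord : MvPolynomial (Fin 2) ℂ := X 0 + MvPolynomial.C Complex.I * X 1

noncomputable def zbarCoord : MvPolynomial (Fin 2) ℂ := X 0 - MvPolynomial.C Complex.I * X 1

noncomputable def wirtingerZ : Derivation ℂ (MvPolynomial (Fin 2) ℂ) (MvPolynomial (Fin 2) ℂ) :=
  (2⁻¹ : ℂ) • (pderiv 0 - Complex.I • pderiv 1)

noncomputable def wirtingerZbar : Derivation ℂ (MvPolynomial (Fin 2) ℂ) (MvPolynomial (Fin 2) ℂ) :=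
  (2⁻¹ : ℂ) • (pderiv 0 + Complex.I • pderiv 1)

theorem wirtingerZbar_zCoord : wirtingerZbar zCoord = 0 := by
  simp [wirtingerZbar, zCoord, pderiv_X, MvPolynomial.smul_eq_C_mul, ← MvPolynomial.C_mul]

theorem wirtingerZbar_zbarCoord : wirtingerZbar zbarCoord = 1 := by
  norm_num [wirtingerZbar, zbarCoord, pderiv_X, MvPolynomial.smul_eq_C_mul, ← MvPolynomial.C_mul,
    ← MvPolynomial.C_add]

theorem wirtingerZ_zbarCoord : wirtingerZ zbarCoord = 0 := by
  simp [wirtingerZ, zbarCoord, pderiv_X, MvPolynomial.smul_eq_C_mul, ← MvPolynomial.C_mul]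

theorem hermiteEval_zCoord_mul (a : Fin 2 → ℂ) (p : MvPolynomial (Fin 2) ℂ) :
    hermiteEval a (zCoord * p) =
      (a 0 + Complex.I * a 1) * hermiteEval a p - 2 * hermiteEval a (wirtingerZbar p) := by
  simp only [zCoord, wirtingerZbar, add_mul, mul_assoc, MvPolynomial.C_mul', smul_mul_assoc,
    map_add, map_smul, hermiteEval_X_mul, Derivation.coe_smul, Derivation.coe_add, Pi.add_apply,
    Pi.smul_apply, smul_eq_mul]
  ring

theorem hermiteEval_zbarCoord_mul (a : Fin 2 → ℂ) (p : MvPolynomial (Fin 2) ℂ) :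
    hermiteEval a (zbarCoord * p) =
      (a 0 - Complex.I * a 1) * hermiteEval a p - 2 * hermiteEval a (wirtingerZ p) := by
  simp only [zbarCoord, wirtingerZ, sub_mul, mul_assoc, MvPolynomial.C_mul', smul_mul_assoc,
    map_sub, map_smul, hermiteEval_X_mul, Derivation.coe_smul, Derivation.coe_sub, Pi.sub_apply,
    Pi.smul_apply, smul_eq_mul]
  ring

theorem hermiteEval_zbarCoord_pow (a : Fin 2 → ℂ) (n : ℕ) :
    hermiteEval a (zbarCoord ^ n) = (a 0 - Complex.I * a 1) ^ n := by
  induction n with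
  | zero => simp [hermiteEval_one]
  | succ n ih =>
    rw [pow_succ', hermiteEval_zbarCoord_mul, ih, Derivation.leibniz_pow, wirtingerZ_zbarCoord]
    simp [pow_succ']

theorem hermiteEval_zCoord_pow_succ_mul (a : Fin 2 → ℂ) (m n : ℕ) :
    hermiteEval a (zCoord ^ (m + 1) * zbarCoord ^ n) =
      (a 0 + Complex.I * a 1) * hermiteEval a (zCoord ^ m * zbarCoord ^ n) -
        2 * n * hermiteEval a (zCoord ^ m * zbarCoord ^ (n - 1)) := by
  rw [pow_succ', mul_assoc, hermiteEval_zCoord_mul, Derivation.leibniz, Derivation.leibniz_pow,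
    Derivation.leibniz_pow, wirtingerZbar_zCoord, wirtingerZbar_zbarCoord]
  simp only [smul_eq_mul, mul_one, mul_zero, add_zero, nsmul_eq_mul]
  rw [mul_left_comm, ← nsmul_eq_mul, map_nsmul, nsmul_eq_mul]
  ring

theorem zCoord_pow_mul_zbarCoord_pow (m n : ℕ) :
    zCoord ^ m * zbarCoord ^ n =
      aeval ![X 0, MvPolynomial.C Complex.I * X 1]
        (homogenize ((1 + Polynomial.X) ^ m * (Polynomial.X - 1) ^ n : ℂ[X]) (m + n)) := by
  rw [homogenize_one_add_X_pow_mul_X_sub_one_pow]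
  simp [zCoord, zbarCoord, add_comm]

end ComplexCoordinates

section HermiteJ

noncomputable def hermiteJTerm (m n : ℕ) (z : ℂ) (ρ : ℝ) (r : ℕ) : ℂ :=
  (-1 : ℂ) ^ r * (r.factorial : ℂ) * (m.choose r : ℂ) * (n.choose r : ℂ) *
    z ^ (m - r) * (starRingEnd ℂ z) ^ (n - r) * (ρ : ℂ) ^ r

theorem hermiteJ_eq_sum_range (m n : ℕ) (z : ℂ) (ρ : ℝ) :
    hermiteJ m n z ρ = ∑ r ∈ range (n + 1), hermiteJTerm m n z ρ r := by
  refine sum_subset (range_subset_range.mpr (by omega)) fun r _ hr => ?_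
  rw [mem_range, not_lt, Nat.succ_le_iff, min_lt_iff] at hr
  rcases hr with h | h <;> simp [Nat.choose_eq_zero_of_lt h]

theorem hermiteJ_zero_left (n : ℕ) (z : ℂ) (ρ : ℝ) : hermiteJ 0 n z ρ = starRingEnd ℂ z ^ n := by
  simp [hermiteJ]

theorem hermiteJTerm_succ_succ (m n r : ℕ) (z : ℂ) (ρ : ℝ) :
    hermiteJTerm (m + 1) (n + 1) z ρ (r + 1) =
      z * hermiteJTerm m (n + 1) z ρ (r + 1) - ρ * (n + 1) * hermiteJTerm m n z ρ r := by
  have hfac : ((r + 1).factorial * (n + 1).choose (r + 1) : ℂ) =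
      (n + 1) * r.factorial * n.choose r := by
    have h := congrArg (Nat.cast (R := ℂ)) (Nat.add_one_mul_choose_eq n r)
    push_cast [Nat.factorial_succ] at h ⊢
    linear_combination -(r.factorial : ℂ) * h
  have hz : z ^ (m - r) * (m.choose (r + 1) : ℂ) = z * z ^ (m - (r + 1)) * m.choose (r + 1) := by
    rcases lt_or_ge r m with h | h
    · rw [← pow_succ', show m - (r + 1) + 1 = m - r by omega]
    · simp [Nat.choose_eq_zero_of_lt (Nat.lt_succ_of_le h)]
  simp only [hermiteJTerm, Nat.choose_succ_succ' m r, Nat.add_sub_add_right, Nat.cast_add]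
  linear_combination (-1 : ℂ) ^ (r + 1) * (starRingEnd ℂ z) ^ (n - r) * (ρ : ℂ) ^ (r + 1) *
    (((r + 1).factorial * (n + 1).choose (r + 1) : ℂ) * hz + z ^ (m - r) * m.choose r * hfac)

theorem hermiteJ_succ_left (m n : ℕ) (z : ℂ) (ρ : ℝ) :
    hermiteJ (m + 1) n z ρ = z * hermiteJ m n z ρ - ρ * n * hermiteJ m (n - 1) z ρ := by
  cases n with
  | zero => simp [hermiteJ, pow_succ']
  | succ n =>
    have hzero : hermiteJTerm (m + 1) (n + 1) z ρ 0 = z * hermiteJTerm m (n + 1) z ρ 0 := by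
      simp [hermiteJTerm, pow_succ', mul_assoc]
    rw [hermiteJ_eq_sum_range, hermiteJ_eq_sum_range, Nat.add_sub_cancel, hermiteJ_eq_sum_range,
      sum_range_succ' (hermiteJTerm (m + 1) (n + 1) z ρ),
      sum_range_succ' (hermiteJTerm m (n + 1) z ρ), mul_add, mul_sum, mul_sum]
    simp only [hermiteJTerm_succ_succ, sum_sub_distrib, hzero, Nat.cast_succ]
    ring

theorem hermiteJ_eq_hermiteEval (m n : ℕ) (x y : ℝ) :
    hermiteJ m n (x + Complex.I * y) 2 = hermiteEval ![(x : ℂ), y] (zCoord ^ m * zbarCoord ^ n) := by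
  induction m generalizing n with
  | zero =>
    rw [hermiteJ_zero_left, pow_zero, one_mul, hermiteEval_zbarCoord_pow]
    simp [sub_eq_add_neg]
  | succ m ih =>
    rw [hermiteJ_succ_left, hermiteEval_zCoord_pow_succ_mul, ih, ih]
    simp

end HermiteJ

/-- for `z = x + iy`, the complex Hermite polynomial `J_{m,l−m}(z) = J_{m,l−m}(z,2)`
expands in products of probabilists' real Hermite polynomials as
`J_{m,l−m}(z) = Σ_{k=0}^{l} i^{l−k} (Σ_{r+s=k} C(m,r) C(l−m,s) (−1)^{l−m−s}) H_k(x) H_{l−k}(y)`. -/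
theorem hermiteJ_expand_in_real_hermite (l m : ℕ) (hm : m ≤ l) (x y : ℝ) :
    hermiteJ m (l - m) ((x : ℂ) + Complex.I * (y : ℂ)) 2 =
      ∑ k ∈ Finset.range (l + 1),
        Complex.I ^ (l - k) *
          (∑ r ∈ Finset.range (k + 1),
            (m.choose r : ℂ) * ((l - m).choose (k - r) : ℂ) * (-1 : ℂ) ^ (l - m - (k - r))) *
          (Polynomial.aeval (x : ℂ) (Polynomial.hermite k)) *
          (Polynomial.aeval (y : ℂ) (Polynomial.hermite (l - k))) := by
  obtain ⟨n, rfl⟩ := Nat.exists_eq_add_of_le hm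
  rw [Nat.add_sub_cancel_left, hermiteJ_eq_hermiteEval, zCoord_pow_mul_zbarCoord_pow,
    hermiteEval_aeval_homogenize]
  refine sum_congr rfl fun k _ => ?_
  rw [coeff_one_add_X_pow_mul_X_sub_one_pow]
  simp
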